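/- The presented group on five generators x₁, x₂, x₃, x₄, x₅ with defining relations x₅x₄x₃x₂x₁ = e, x₄ = x₅, (x₅x₃x₂)² = (x₃x₂x₅)², (x₃x₂x₅)² = (x₂x₅x₃)², x₁ = x₅x₃x₂x₃⁻¹x₅⁻¹, x₁ = x₄x₂x₄⁻¹, (x₂x₄)² = (x₄x₂)², x₃⁻¹x₄x₃ = x₅ is isomorphic to the presented group ⟨a, b | (ab)² = (ba)²⟩. -/
import Mathlib


namespace Stmt4

/-- Generators `x₁, …, x₅` of the free group, indexed by `0, …, 4`. -/
def x (i : Fin 5) : FreeGroup (Fin 5) := FreeGroup.of i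

/-- The relators corresponding to the defining relations
`x₅x₄x₃x₂x₁ = e`, `x₄ = x₅`, `(x₅x₃x₂)² = (x₃x₂x₅)²`, `(x₃x₂x₅)² = (x₂x₅x₃)²`,
`x₁ = x₅x₃x₂x₃⁻¹x₅⁻¹`, `x₁ = x₄x₂x₄⁻¹`, `(x₂x₄)² = (x₄x₂)²`, `x₃⁻¹x₄x₃ = x₅`. -/
def rels : Set (FreeGroup (Fin 5)) :=
  { x 4 * x 3 * x 2 * x 1 * x 0,
    x 3 * (x 4)⁻¹,
    (x 4 * x 2 * x 1) ^ 2 * ((x 2 * x 1 * x 4) ^ 2)⁻¹,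
    (x 2 * x 1 * x 4) ^ 2 * ((x 1 * x 4 * x 2) ^ 2)⁻¹,
    x 0 * (x 4 * x 2 * x 1 * (x 2)⁻¹ * (x 4)⁻¹)⁻¹,
    x 0 * (x 3 * x 1 * (x 3)⁻¹)⁻¹,
    (x 1 * x 3) ^ 2 * ((x 3 * x 1) ^ 2)⁻¹,
    ((x 2)⁻¹ * x 3 * x 2) * (x 4)⁻¹ }

/-- The single relator `(ab)²((ba)²)⁻¹` of the presentation `⟨a, b | (ab)² = (ba)²⟩`. -/
def rels' : Set (FreeGroup (Fin 2)) :=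
  {(FreeGroup.of 0 * FreeGroup.of 1) ^ 2 * ((FreeGroup.of 1 * FreeGroup.of 0) ^ 2)⁻¹}


lemma mk_rel_eq_one {α} {R : Set (FreeGroup α)} {r} (h : r ∈ R) :
    PresentedGroup.mk R r = 1 :=
  (QuotientGroup.eq_one_iff _).mpr (Subgroup.subset_normalClosure h)

def X (i : Fin 5) : PresentedGroup rels := PresentedGroup.of i
def A : PresentedGroup rels' := PresentedGroup.of 0
def B : PresentedGroup rels' := PresentedGroup.of 1

lemma hAB : (A * B) ^ 2 = (B * A) ^ 2 := by
  have h := mk_rel_eq_one (R := rels') rfl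
  simp only [map_mul, map_pow, map_inv, mul_inv_eq_one] at h
  exact h

def f : Fin 5 → PresentedGroup rels' :=
  ![B * A * B⁻¹, A, ((A * B) ^ 2)⁻¹, B, B]

def g : Fin 2 → PresentedGroup rels :=
  ![X 1, X 4]

lemma hf : ∀ r ∈ rels, FreeGroup.lift f r = 1 := by
  have hab := hAB
  set a := A with ha'
  set b := B with hb'
  simp only [pow_two] at hab
  intro r hr
  simp only [rels, Set.mem_insert_iff, Set.mem_singleton_iff] at hr
  rcases hr with rfl | rfl | rfl | rfl | rfl | rfl | rfl | rfl <;>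
    simp only [x, map_mul, map_inv, map_pow, FreeGroup.lift_apply_of, f, Matrix.cons_val_zero,
      Matrix.cons_val_one, Matrix.head_cons, Matrix.cons_val_two, Matrix.tail_cons,
      Matrix.cons_val_three, Matrix.cons_val_four, ← ha', ← hb', pow_two]
  · group
  · group
  · rw [show (b * (a*b*(a*b))⁻¹ * a) = a⁻¹*b⁻¹ by group,
        show ((a*b*(a*b))⁻¹ * a * b) = b⁻¹*a⁻¹ by group,
        show a⁻¹*b⁻¹*(a⁻¹*b⁻¹) = (b*a*(b*a))⁻¹ by group,
        show b⁻¹*a⁻¹*(b⁻¹*a⁻¹) = (a*b*(a*b))⁻¹ by group, hab]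
    group
  · group
  · rw [show (b * (a*b*(a*b))⁻¹ * a * ((a*b*(a*b))⁻¹)⁻¹ * b⁻¹) = a⁻¹*(b⁻¹*(a*b*(a*b)))*b⁻¹
        by group, mul_inv_eq_one, hab]
    group
  · group
  · rw [hab]; group
  · rw [show (((a*b*(a*b))⁻¹)⁻¹ * b * (a*b*(a*b))⁻¹) * b⁻¹
          = (a*b*(a*b)) * (b*(a*b*(a*b))*b⁻¹)⁻¹ by group,
        show b*(a*b*(a*b))*b⁻¹ = (b*a*(b*a))*(b*b⁻¹) by group, hab]
    group

lemma E1 : X 4 * X 3 * X 2 * X 1 * X 0 = 1 := by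
  have h := mk_rel_eq_one (R := rels) (Set.mem_insert _ _)
  simp only [x, map_mul] at h
  exact h

lemma E2 : X 3 = X 4 := by
  have h := mk_rel_eq_one (R := rels) (Set.mem_insert_of_mem _ (Set.mem_insert _ _))
  simp only [x, map_mul, map_inv, mul_inv_eq_one] at h
  exact h

lemma E6 : X 0 = X 3 * X 1 * (X 3)⁻¹ := by
  have h := mk_rel_eq_one (R := rels) (Set.mem_insert_of_mem _ (Set.mem_insert_of_mem _
    (Set.mem_insert_of_mem _ (Set.mem_insert_of_mem _ (Set.mem_insert_of_mem _
      (Set.mem_insert _ _))))))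
  simp only [x, map_mul, map_inv, mul_inv_eq_one] at h
  exact h

lemma E7 : (X 1 * X 4) ^ 2 = (X 4 * X 1) ^ 2 := by
  have h := mk_rel_eq_one (R := rels) (Set.mem_insert_of_mem _ (Set.mem_insert_of_mem _
    (Set.mem_insert_of_mem _ (Set.mem_insert_of_mem _ (Set.mem_insert_of_mem _
      (Set.mem_insert_of_mem _ (Set.mem_insert _ _)))))))
  simp only [x, map_mul, map_pow, map_inv, mul_inv_eq_one] at h
  have h' : (X 1 * X 3) ^ 2 = (X 3 * X 1) ^ 2 := h
  rwa [E2] at h'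

lemma hX0 : X 0 = X 4 * X 1 * (X 4)⁻¹ := by rw [E6, E2]

lemma hX2 : X 2 = ((X 1 * X 4) ^ 2)⁻¹ := by
  have h := E1
  rw [E2, hX0] at h
  refine eq_inv_of_mul_eq_one_left ?_
  simp only [pow_two]
  calc X 2 * (X 1 * X 4 * (X 1 * X 4))
      = (X 4)⁻¹ * (X 4)⁻¹ * (X 4 * X 4 * X 2 * X 1 * (X 4 * X 1 * (X 4)⁻¹)) * (X 4 * X 4) := by
        group
    _ = (X 4)⁻¹ * (X 4)⁻¹ * 1 * (X 4 * X 4) := by rw [h]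
    _ = 1 := by group

lemma hg : ∀ r ∈ rels', FreeGroup.lift g r = 1 := by
  intro r hr
  simp only [rels', Set.mem_singleton_iff] at hr
  subst hr
  simp only [map_mul, map_pow, map_inv, FreeGroup.lift_apply_of, g, Matrix.cons_val_zero,
    Matrix.cons_val_one, Matrix.head_cons, mul_inv_eq_one]
  exact E7

def φ : PresentedGroup rels →* PresentedGroup rels' := PresentedGroup.toGroup hf
def ψ : PresentedGroup rels' →* PresentedGroup rels := PresentedGroup.toGroup hg

lemma φof (i : Fin 5) : φ (PresentedGroup.of i) = f i := PresentedGroup.toGroup.of hf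
lemma ψof (i : Fin 2) : ψ (PresentedGroup.of i) = g i := PresentedGroup.toGroup.of hg

lemma K0 : ψ (φ (PresentedGroup.of (0 : Fin 5))) = PresentedGroup.of (0 : Fin 5) := by
  rw [φof]
  show ψ (B * A * B⁻¹) = X 0
  rw [map_mul, map_mul, map_inv, show ψ A = X 1 from ψof 0, show ψ B = X 4 from ψof 1]
  exact hX0.symm

lemma K1 : ψ (φ (PresentedGroup.of (1 : Fin 5))) = PresentedGroup.of (1 : Fin 5) := by
  rw [φof]; show ψ A = X 1; exact ψof 0

lemma K2 : ψ (φ (PresentedGroup.of (2 : Fin 5))) = PresentedGroup.of (2 : Fin 5) := by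
  rw [φof]
  show ψ (((A * B) ^ 2)⁻¹) = X 2
  rw [map_inv, map_pow, map_mul, show ψ A = X 1 from ψof 0, show ψ B = X 4 from ψof 1]
  exact hX2.symm

lemma K3 : ψ (φ (PresentedGroup.of (3 : Fin 5))) = PresentedGroup.of (3 : Fin 5) := by
  rw [φof]; show ψ B = X 3; rw [show ψ B = X 4 from ψof 1]; exact E2.symm

lemma K4 : ψ (φ (PresentedGroup.of (4 : Fin 5))) = PresentedGroup.of (4 : Fin 5) := by
  rw [φof]; show ψ B = X 4; exact ψof 1

lemma L0 : φ (ψ (PresentedGroup.of (0 : Fin 2))) = PresentedGroup.of (0 : Fin 2) := by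
  rw [ψof]; show φ (X 1) = A; exact φof 1

lemma L1 : φ (ψ (PresentedGroup.of (1 : Fin 2))) = PresentedGroup.of (1 : Fin 2) := by
  rw [ψof]; show φ (X 4) = B; exact φof 4

theorem presentation_iso :
    Nonempty (PresentedGroup rels ≃* PresentedGroup rels') := by
  refine ⟨MonoidHom.toMulEquiv φ ψ ?_ ?_⟩
  · refine PresentedGroup.ext fun i => ?_
    simp only [MonoidHom.comp_apply, MonoidHom.id_apply]
    fin_cases i
    exacts [K0, K1, K2, K3, K4]
  · refine PresentedGroup.ext fun i => ?_
    simp only [MonoidHom.comp_apply, MonoidHom.id_apply]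
    fin_cases i
    exacts [L0, L1]

end Stmt4
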